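/- Let G be a signed complete graph. Every triangle of G has an odd number of positive edges if and only if there exists a function f from vertices to {+1,-1} such that the sign of every edge {u,v} equals f(u) * f(v). -/

import Mathlib

/-!
A sign is a unit of `ℤ`, and a triangle has an odd number of positive edges exactly when the
product of its three signs is `1`. Balanced signings satisfy this since each `f v` occurs twice in
the product. Conversely, fixing a root `v₀` and setting `f v := s v₀ v` (and `f v₀ := 1`), the
triangle `v₀ u v` gives `s u v = s v₀ u * s v₀ v`, because every sign squares to `1`.
-/

theorem odd_card_pos_iff_mul_eq_one {a b c : ℤ} (ha : a = 1 ∨ a = -1) (hb : b = 1 ∨ b = -1)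
    (hc : c = 1 ∨ c = -1) :
    Odd ((if a = 1 then 1 else 0) + (if b = 1 then 1 else 0) + (if c = 1 then 1 else 0) : ℕ) ↔
      a * b * c = 1 := by
  rcases ha with rfl | rfl <;> rcases hb with rfl | rfl <;> rcases hc with rfl | rfl <;> decide

theorem exists_sign_mul_eq_of_triangle_mul_eq_one {V : Type*} (s : V → V → ℤ)
    (hsymm : ∀ u v : V, s u v = s v u)
    (hsign : ∀ u v : V, u ≠ v → s u v = 1 ∨ s u v = -1)
    (htri : ∀ u v w : V, u ≠ v → v ≠ w → u ≠ w → s u v * s v w * s u w = 1) :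
    ∃ f : V → ℤ, (∀ v : V, f v = 1 ∨ f v = -1) ∧ ∀ u v : V, u ≠ v → s u v = f u * f v := by
  classical
  rcases isEmpty_or_nonempty V with hV | hV
  · exact ⟨1, fun _ => Or.inl rfl, fun u => isEmptyElim u⟩
  obtain ⟨v₀⟩ := hV
  let f : V → ℤ := fun v => if v = v₀ then 1 else s v₀ v
  have hf_sign (v : V) : f v = 1 ∨ f v = -1 := by
    by_cases hv : v = v₀
    · simp [f, hv]
    · simpa [f, hv] using hsign v₀ v (Ne.symm hv)
  refine ⟨f, hf_sign, fun u v huv => ?_⟩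
  by_cases hu : u = v₀
  · subst hu
    simp [f, Ne.symm huv]
  by_cases hv : v = v₀
  · subst hv
    simp [f, hu, hsymm u]
  have hsq (w : V) (hw : w ≠ v₀) : s v₀ w * s v₀ w = 1 :=
    Int.isUnit_mul_self (Int.isUnit_iff.mpr (hsign v₀ w (Ne.symm hw)))
  have hroot := htri v₀ u v (Ne.symm hu) huv (Ne.symm hv)
  simp only [f, if_neg hu, if_neg hv]
  linear_combination (-s u v) * hsq u hu + (-s u v * s v₀ u * s v₀ u) * hsq v hv +
    (s v₀ u * s v₀ v) * hroot

theorem stmt12_general {V : Type*} (s : V → V → ℤ)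
    (hsymm : ∀ u v : V, s u v = s v u)
    (hsign : ∀ u v : V, u ≠ v → s u v = 1 ∨ s u v = -1) :
    (∀ u v w : V, u ≠ v → v ≠ w → u ≠ w →
      Odd ((if s u v = 1 then 1 else 0) + (if s v w = 1 then 1 else 0) +
        (if s u w = 1 then 1 else 0) : ℕ)) ↔
    (∃ f : V → ℤ, (∀ v : V, f v = 1 ∨ f v = -1) ∧
      ∀ u v : V, u ≠ v → s u v = f u * f v) := by
  have hodd_iff (u v w : V) (huv : u ≠ v) (hvw : v ≠ w) (huw : u ≠ w) :=
    odd_card_pos_iff_mul_eq_one (hsign u v huv) (hsign v w hvw) (hsign u w huw)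
  constructor
  · intro hodd
    exact exists_sign_mul_eq_of_triangle_mul_eq_one s hsymm hsign fun u v w huv hvw huw =>
      (hodd_iff u v w huv hvw huw).mp (hodd u v w huv hvw huw)
  · rintro ⟨f, hf, hsf⟩ u v w huv hvw huw
    have hsq (x : V) : f x * f x = 1 := Int.isUnit_mul_self (Int.isUnit_iff.mpr (hf x))
    rw [hodd_iff u v w huv hvw huw, hsf u v huv, hsf v w hvw, hsf u w huw]
    linear_combination (f v * f v * f w * f w) * hsq u + (f w * f w) * hsq v + hsq w

/-- A signed complete graph has every triangle with an odd number of positive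
edges iff there is a two-coloring f : V → {±1} with s u v = f u * f v. -/
theorem stmt12 {V : Type*} [Fintype V] (s : V → V → ℤ)
    (hsymm : ∀ u v : V, s u v = s v u)
    (hsign : ∀ u v : V, u ≠ v → s u v = 1 ∨ s u v = -1) :
    (∀ u v w : V, u ≠ v → v ≠ w → u ≠ w →
      Odd ((if s u v = 1 then 1 else 0) + (if s v w = 1 then 1 else 0) +
        (if s u w = 1 then 1 else 0) : ℕ)) ↔
    (∃ f : V → ℤ, (∀ v : V, f v = 1 ∨ f v = -1) ∧
      ∀ u v : V, u ≠ v → s u v = f u * f v) :=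
  stmt12_general s hsymm hsign
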